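/- arXiv:2102.10061 — 6 statements merged into one kernel-verified Lean document; each statement's English description precedes it below -/
import Mathlib

section
/- For every graph G, wcol_∞(G) equals the treedepth of G, where wcol_∞ allows weakly reachable paths of arbitrary length. -/
open SimpleGraph

/-- `u` is weakly `∞`-reachable from `v` in the ordering `σ`. -/
def WeaklyReachableInf {V : Type} (G : SimpleGraph V) (σ : V → ℕ) (v u : V) : Prop :=
  ∃ p : G.Walk u v, p.IsPath ∧ ∀ w ∈ p.support, σ u ≤ σ w

/-- `wcol_∞(G)`. -/
noncomputable def wcolInf {V : Type} (G : SimpleGraph V) : ℕ :=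
  sInf { n | ∃ σ : V → ℕ, Function.Injective σ ∧
    sSup { m | ∃ v : V, {u | WeaklyReachableInf G σ v u}.ncard = m } = n }

/-- The treedepth of `G`: the minimum `k` such that there is a forest order `le` on the
vertices (a partial order in which the set of ancestors of every element is a chain) whose
closure contains `G` (adjacent vertices are comparable) and all of whose chains have at
most `k` elements. -/
noncomputable def treedepth {V : Type} (G : SimpleGraph V) : ℕ :=
  sInf { k | ∃ le : V → V → Prop,
    (∀ v, le v v) ∧
    (∀ u v w, le u v → le v w → le u w) ∧
    (∀ u v, le u v → le v u → u = v) ∧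
    (∀ u v w, le u w → le v w → le u v ∨ le v u) ∧
    (∀ u v, G.Adj u v → le u v ∨ le v u) ∧
    (∀ c : Set V, IsChain le c → c.ncard ≤ k) }

/-!
For an injective ordering `σ`, "`u` is weakly reachable from `v`" is itself an elimination forest
order of `G`: paths concatenate, two vertices weakly reachable from a common vertex are joined
by a path through it, and the endpoints of an edge are comparable. A chain of this order lies in
the weakly reachable set of its `σ`-largest element, so `td(G) ≤ wcol_∞(G)`.

Conversely, number the vertices along a linear extension of an elimination forest. Every edge
joins comparable vertices, so a walk leaving the subtree of `u` must step to a proper ancestor of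
`u`, which comes earlier than `u`. Hence every weakly reachable set lies on a root-to-vertex
chain, and `wcol_∞(G) ≤ td(G)`.
-/

/-- `le` is the ancestor relation of a rooted forest (a partial order in which the ancestors of
each vertex form a chain) whose closure contains `G`. -/
structure IsEliminationForest {V : Type} (G : SimpleGraph V) (le : V → V → Prop) : Prop where
  refl : ∀ v, le v v
  trans : ∀ u v w, le u v → le v w → le u w
  antisymm : ∀ u v, le u v → le v u → u = v
  total_of_le : ∀ u v w, le u w → le v w → le u v ∨ le v u
  total_of_adj : ∀ u v, G.Adj u v → le u v ∨ le v u

theorem IsEliminationForest.isPartialOrder {V : Type} {G : SimpleGraph V} {le : V → V → Prop}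
    (hF : IsEliminationForest G le) : IsPartialOrder V le where
  refl := hF.refl
  trans := hF.trans
  antisymm := hF.antisymm

theorem treedepth_eq_sInf {V : Type} (G : SimpleGraph V) :
    treedepth G = sInf {k | ∃ le, IsEliminationForest G le ∧
      ∀ c : Set V, IsChain le c → c.ncard ≤ k} :=
  congrArg sInf (Set.ext fun _ => exists_congr fun _ =>
    ⟨fun ⟨h₁, h₂, h₃, h₄, h₅, h₆⟩ => ⟨⟨h₁, h₂, h₃, h₄, h₅⟩, h₆⟩,
      fun ⟨⟨h₁, h₂, h₃, h₄, h₅⟩, h₆⟩ => ⟨h₁, h₂, h₃, h₄, h₅, h₆⟩⟩)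

section WeaklyReachable

variable {V : Type} {G : SimpleGraph V} {σ : V → ℕ} {u v w : V}

namespace WeaklyReachableInf

theorem of_walk (p : G.Walk u v) (h : ∀ w ∈ p.support, σ u ≤ σ w) :
    WeaklyReachableInf G σ v u := by
  classical
  exact ⟨p.bypass, p.bypass_isPath, fun w hw => h w (p.support_bypass_subset_support hw)⟩

theorem refl (v : V) : WeaklyReachableInf G σ v v :=
  of_walk Walk.nil (by simp)

theorem le (h : WeaklyReachableInf G σ v u) : σ u ≤ σ v := by
  obtain ⟨p, -, hp⟩ := h
  exact hp v p.end_mem_support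

theorem trans (huv : WeaklyReachableInf G σ v u) (hvw : WeaklyReachableInf G σ w v) :
    WeaklyReachableInf G σ w u := by
  obtain ⟨p, -, hp⟩ := huv
  obtain ⟨q, -, hq⟩ := hvw
  refine of_walk (p.append q) fun x hx => ?_
  rcases (Walk.mem_support_append_iff _ _).1 hx with hx | hx
  · exact hp x hx
  · exact (hp v p.end_mem_support).trans (hq x hx)

theorem antisymm (hσ : Function.Injective σ) (huv : WeaklyReachableInf G σ v u)
    (hvu : WeaklyReachableInf G σ u v) : u = v :=
  hσ (huv.le.antisymm hvu.le)

theorem of_adj (hadj : G.Adj u v) (hσ : σ u ≤ σ v) : WeaklyReachableInf G σ v u :=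
  of_walk hadj.toWalk (by simpa using hσ)

theorem of_common (hu : WeaklyReachableInf G σ w u) (hv : WeaklyReachableInf G σ w v)
    (hσ : σ u ≤ σ v) : WeaklyReachableInf G σ v u := by
  obtain ⟨p, -, hp⟩ := hu
  obtain ⟨q, -, hq⟩ := hv
  refine of_walk (p.append q.reverse) fun x hx => ?_
  rcases (Walk.mem_support_append_iff _ _).1 hx with hx | hx
  · exact hp x hx
  · rw [Walk.support_reverse, List.mem_reverse] at hx
    exact hσ.trans (hq x hx)

theorem total_of_common (hu : WeaklyReachableInf G σ w u) (hv : WeaklyReachableInf G σ w v) :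
    WeaklyReachableInf G σ v u ∨ WeaklyReachableInf G σ u v :=
  (le_total (σ u) (σ v)).imp (of_common hu hv) (of_common hv hu)

theorem total_of_adj (hadj : G.Adj u v) :
    WeaklyReachableInf G σ v u ∨ WeaklyReachableInf G σ u v :=
  (le_total (σ u) (σ v)).imp (of_adj hadj) (of_adj hadj.symm)

end WeaklyReachableInf

theorem isEliminationForest_weaklyReachableInf (hσ : Function.Injective σ) :
    IsEliminationForest G fun u v => WeaklyReachableInf G σ v u where
  refl := .refl
  trans _ _ _ huv hvw := huv.trans hvw
  antisymm _ _ huv hvu := huv.antisymm hσ hvu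
  total_of_le _ _ _ hu hv := hu.total_of_common hv
  total_of_adj _ _ hadj := WeaklyReachableInf.total_of_adj hadj

end WeaklyReachable

noncomputable def maxWReach {V : Type} (G : SimpleGraph V) (σ : V → ℕ) : ℕ :=
  ⨆ v, {u | WeaklyReachableInf G σ v u}.ncard

theorem wcolInf_eq_sInf {V : Type} (G : SimpleGraph V) :
    wcolInf G = sInf {n | ∃ σ : V → ℕ, Function.Injective σ ∧ maxWReach G σ = n} :=
  rfl

section Finite

variable {V : Type} [Finite V] {G : SimpleGraph V}

theorem ncard_weaklyReachableInf_le_maxWReach (σ : V → ℕ) (v : V) :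
    {u | WeaklyReachableInf G σ v u}.ncard ≤ maxWReach G σ :=
  le_ciSup (f := fun v => {u | WeaklyReachableInf G σ v u}.ncard)
    (Set.finite_range _).bddAbove v

theorem ncard_le_maxWReach_of_isChain {σ : V → ℕ} (hσ : Function.Injective σ) {c : Set V}
    (hc : IsChain (fun u v => WeaklyReachableInf G σ v u) c) : c.ncard ≤ maxWReach G σ := by
  rcases c.eq_empty_or_nonempty with rfl | hne
  · simp
  obtain ⟨a, ha, hmax⟩ := Set.exists_max_image c σ c.toFinite hne
  have hsub : c ⊆ {u | WeaklyReachableInf G σ a u} := by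
    intro u hu
    rcases eq_or_ne u a with rfl | hua
    · exact .refl u
    refine (hc hu ha hua).resolve_right fun hau => hua (hσ ?_)
    exact hau.le.antisymm' (hmax u hu)
  exact (Set.ncard_le_ncard hsub).trans (ncard_weaklyReachableInf_le_maxWReach σ a)

theorem treedepth_le_maxWReach {σ : V → ℕ} (hσ : Function.Injective σ) :
    treedepth G ≤ maxWReach G σ :=
  treedepth_eq_sInf G ▸ Nat.sInf_le
    ⟨_, isEliminationForest_weaklyReachableInf hσ, fun _ => ncard_le_maxWReach_of_isChain hσ⟩

end Finite

namespace IsEliminationForest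

variable {V : Type} {G : SimpleGraph V} {le : V → V → Prop} {σ : V → ℕ}

theorem le_of_walk (hF : IsEliminationForest G le) (hσ : Function.Injective σ)
    (hmono : ∀ u v, le u v → σ u ≤ σ v) {u a v : V} (p : G.Walk a v) (hua : le u a)
    (hp : ∀ w ∈ p.support, σ u ≤ σ w) : le u v := by
  induction p with
  | nil => exact hua
  | @cons x y z hxy q ih =>
    refine ih ?_ fun w hw => hp w (List.mem_cons_of_mem _ hw)
    rcases hF.total_of_adj x y hxy with hxy | hyx
    · exact hF.trans u x y hua hxy
    rcases hF.total_of_le u y x hua hyx with huy | hyu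
    · exact huy
    have : u = y := hσ ((hp y (by simp)).antisymm (hmono y u hyu))
    exact this ▸ hF.refl u

theorem le_of_weaklyReachableInf (hF : IsEliminationForest G le) (hσ : Function.Injective σ)
    (hmono : ∀ u v, le u v → σ u ≤ σ v) {u v : V} (h : WeaklyReachableInf G σ v u) :
    le u v := by
  obtain ⟨p, -, hp⟩ := h
  exact hF.le_of_walk hσ hmono p (hF.refl u) hp

theorem maxWReach_le [Finite V] (hF : IsEliminationForest G le) (hσ : Function.Injective σ)
    (hmono : ∀ u v, le u v → σ u ≤ σ v) {k : ℕ}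
    (hk : ∀ c : Set V, IsChain le c → c.ncard ≤ k) : maxWReach G σ ≤ k :=
  ciSup_le' fun v =>
    (Set.ncard_le_ncard fun _ => hF.le_of_weaklyReachableInf hσ hmono).trans
      (hk _ fun a ha b hb _ => hF.total_of_le a b v ha hb)

end IsEliminationForest

theorem exists_injective_monotone {V : Type} [Finite V] (r : V → V → Prop)
    [IsPartialOrder V r] : ∃ σ : V → ℕ, Function.Injective σ ∧ ∀ u v, r u v → σ u ≤ σ v := by
  -- `σ v` is the number of predecessors of `v` in a linear extension `s` of `r`.
  obtain ⟨s, hs, hrs⟩ := extend_partialOrder r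
  have hsub : ∀ u v, s u v → {w | s w u} ⊆ {w | s w v} := fun u v huv w hwu =>
    _root_.trans hwu huv
  have heq : ∀ u v, s u v → {w | s w v}.ncard ≤ {w | s w u}.ncard → u = v := by
    intro u v huv hvu
    have hvu' : v ∈ {w | s w u} := Set.eq_of_subset_of_ncard_le (hsub u v huv) hvu ▸ refl v
    exact antisymm huv hvu'
  refine ⟨fun v => {w | s w v}.ncard, fun u v huv => ?_,
    fun u v huv => Set.ncard_le_ncard (hsub u v (hrs u v huv))⟩
  rcases total_of s u v with h | h
  · exact heq u v h huv.ge
  · exact (heq v u h huv.le).symm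

theorem wcolInf_eq_treedepth
    {V : Type} [Fintype V] (G : SimpleGraph V) :
    wcolInf G = treedepth G := by
  obtain ⟨σ₀, hσ₀⟩ := Countable.exists_injective_nat V
  apply le_antisymm
  · rw [treedepth_eq_sInf, wcolInf_eq_sInf]
    refine le_csInf ⟨_, _, isEliminationForest_weaklyReachableInf hσ₀,
      fun _ => ncard_le_maxWReach_of_isChain hσ₀⟩ ?_
    rintro k ⟨le, hF, hk⟩
    have := hF.isPartialOrder
    obtain ⟨σ, hσ, hmono⟩ := exists_injective_monotone le
    exact le_trans (Nat.sInf_le ⟨σ, hσ, rfl⟩) (hF.maxWReach_le hσ hmono hk)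
  · rw [wcolInf_eq_sInf]
    refine le_csInf ⟨_, σ₀, hσ₀, rfl⟩ ?_
    rintro _ ⟨σ, hσ, rfl⟩
    exact treedepth_le_maxWReach hσ
end

section
/- For every integer r ≥ 1 and every path P, the r-th weak coloring number of P is at most ⌈log₂ r⌉ + 2. -/
open SimpleGraph

/-- `u` is weakly `r`-reachable from `v` in the ordering `σ`:
there is a `u`–`v` path of length at most `r` all of whose vertices `w` satisfy `σ u ≤ σ w`. -/
def WeaklyReachable {V : Type} (G : SimpleGraph V) (σ : V → ℕ) (r : ℕ) (v u : V) : Prop :=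
  ∃ p : G.Walk u v, p.IsPath ∧ p.length ≤ r ∧ ∀ w ∈ p.support, σ u ≤ σ w

/-- `wcol_r(G, σ)`: the maximum over vertices `v` of `|WReach_r[G,σ,v]|`. -/
noncomputable def wcolOrd {V : Type} (G : SimpleGraph V) (σ : V → ℕ) (r : ℕ) : ℕ :=
  sSup { n | ∃ v : V, {u | WeaklyReachable G σ r v u}.ncard = n }

/-- `wcol_r(G)`: the minimum of `wcol_r(G, σ)` over vertex orderings `σ`. -/
noncomputable def wcol {V : Type} (G : SimpleGraph V) (r : ℕ) : ℕ :=
  sInf { n | ∃ σ : V → ℕ, Function.Injective σ ∧ wcolOrd G σ r = n }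

/-!
Label vertex `i` of the path by `i + 1` and order the vertices by decreasing 2-adic valuation
of their labels. If `u` is weakly reachable from `v`, the label `p` of `u` has the largest
valuation `k` on the interval between `p` and the label `x` of `v`. Then `|p - x| < 2 ^ k`, since
otherwise `p ± 2 ^ k` would lie in the interval, and consequently `v₂(x) < k` and `k` determines
`p`. Two such labels with valuations `k < K` are distinct multiples of `2 ^ k` at distance at most
`2r` from each other, so `2 ^ k ≤ 2r`; parity sharpens this to `k ≤ v₂(x) + ⌈log₂ r⌉`. Hence all
valuations but the largest lie in `(v₂(x), v₂(x) + ⌈log₂ r⌉]`. For `r = 1` the natural order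
already gives the bound `2`.
-/

def IsTwoAdicPeak (p x : ℕ) : Prop :=
  ∀ q ∈ Set.uIcc p x, padicValNat 2 q ≤ padicValNat 2 p

lemma Nat.le_dist_of_dvd {m a b : ℕ} (ha : m ∣ a) (hb : m ∣ b) (hab : a ≠ b) :
    m ≤ Nat.dist a b := by
  unfold Nat.dist
  rcases hab.lt_or_gt with h | h
  · have := Nat.le_of_dvd (Nat.sub_pos_of_lt h) (Nat.dvd_sub hb ha)
    omega
  · have := Nat.le_of_dvd (Nat.sub_pos_of_lt h) (Nat.dvd_sub ha hb)
    omega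

lemma exists_mem_uIcc_padicValNat_lt {p y : ℕ} (hp : p ≠ 0) (hy : y ≠ 0)
    (h : 2 ^ padicValNat 2 p ≤ Nat.dist p y) :
    ∃ q ∈ Set.uIcc p y, padicValNat 2 p < padicValNat 2 q := by
  have hndvd := pow_succ_padicValNat_not_dvd (p := 2) hp
  obtain ⟨a, ha⟩ : 2 ^ padicValNat 2 p ∣ p := pow_padicValNat_dvd
  generalize padicValNat 2 p = k at *
  obtain ⟨t, rfl⟩ : Odd a := by
    refine Nat.not_even_iff_odd.mp fun ⟨t, ht⟩ => hndvd ⟨t, ?_⟩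
    rw [ha, ht, pow_succ]
    ring
  -- `p = 2^k * odd`, so both neighbouring multiples `p ± 2^k` of `2^k` are divisible by `2^(k+1)`
  have hp' : p = 2 ^ (k + 1) * t + 2 ^ k := by rw [ha, pow_succ]; ring
  have hk : 2 ^ (k + 1) = 2 * 2 ^ k := by rw [pow_succ, mul_comm]
  have lt_of_dvd : ∀ m ≠ 0, k < padicValNat 2 (2 ^ (k + 1) * m) := fun m hm =>
    (padicValNat_dvd_iff_le (by positivity)).mp (dvd_mul_right _ m)
  unfold Nat.dist at h
  rcases le_or_gt p y with hpy | hyp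
  · refine ⟨2 ^ (k + 1) * (t + 1), Set.mem_uIcc.mpr (Or.inl ⟨?_, ?_⟩),
      lt_of_dvd _ t.succ_ne_zero⟩
    all_goals rw [mul_add, mul_one]; omega
  · have ht : t ≠ 0 := by rintro rfl; omega
    refine ⟨2 ^ (k + 1) * t, Set.mem_uIcc.mpr (Or.inr ⟨?_, ?_⟩), lt_of_dvd _ ht⟩
    all_goals omega

namespace IsTwoAdicPeak

variable {p p' x : ℕ}

lemma dist_lt (h : IsTwoAdicPeak p x) (hp : p ≠ 0) (hx : x ≠ 0) :
    Nat.dist p x < 2 ^ padicValNat 2 p := by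
  by_contra! hle
  obtain ⟨q, hq, hlt⟩ := exists_mem_uIcc_padicValNat_lt hp hx hle
  exact (h q hq).not_gt hlt

lemma padicValNat_lt (h : IsTwoAdicPeak p x) (hp : p ≠ 0) (hx : x ≠ 0) (hpx : p ≠ x) :
    padicValNat 2 x < padicValNat 2 p := by
  refine (h x Set.right_mem_uIcc).lt_of_ne fun heq => (h.dist_lt hp hx).not_ge ?_
  exact Nat.le_dist_of_dvd pow_padicValNat_dvd (heq ▸ pow_padicValNat_dvd) hpx

lemma eq_of_padicValNat_eq (h : IsTwoAdicPeak p x) (h' : IsTwoAdicPeak p' x) (hp : p ≠ 0)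
    (hp' : p' ≠ 0) (heq : padicValNat 2 p = padicValNat 2 p') : p = p' := by
  by_contra hne
  obtain ⟨q, hq, hlt⟩ := exists_mem_uIcc_padicValNat_lt hp hp'
    (Nat.le_dist_of_dvd pow_padicValNat_dvd (heq ▸ pow_padicValNat_dvd) hne)
  rcases Set.uIcc_subset_uIcc_union_uIcc (b := x) hq with hq | hq
  · exact (h q hq).not_gt hlt
  · exact (h' q (Set.uIcc_comm x p' ▸ hq)).not_gt (heq ▸ hlt)

end IsTwoAdicPeak

lemma padicValNat_le_add_clog {p p' x r : ℕ} (hx : x ≠ 0) (hr : 2 ≤ r)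
    (hpx : Nat.dist p x ≤ r) (hp'x : Nat.dist p' x ≤ r)
    (hlt : padicValNat 2 p < padicValNat 2 p') :
    padicValNat 2 p ≤ padicValNat 2 x + Nat.clog 2 r := by
  set k := padicValNat 2 p
  set c := Nat.clog 2 r
  have hrc : r ≤ 2 ^ c := Nat.le_pow_clog one_lt_two r
  have hc : 1 ≤ c := Nat.clog_pos one_lt_two hr
  have hkp : 2 ^ k ∣ p := pow_padicValNat_dvd
  have hkp' : 2 ^ k ∣ p' := (pow_dvd_pow 2 hlt.le).trans pow_padicValNat_dvd
  have hsum : 2 ^ k ≤ Nat.dist p x + Nat.dist p' x := calc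
    2 ^ k ≤ Nat.dist p p' := Nat.le_dist_of_dvd hkp hkp' fun h => hlt.ne (h ▸ rfl)
    _ ≤ Nat.dist p x + Nat.dist x p' := Nat.dist.triangle_inequality p x p'
    _ = Nat.dist p x + Nat.dist p' x := by rw [Nat.dist_comm x]
  have hkc : k ≤ c + 1 := by
    rw [← Nat.pow_le_pow_iff_right one_lt_two, pow_succ]
    omega
  by_contra! hbig
  -- Now `x` is odd and `k = c + 1`, so both distances equal `r = 2 ^ c`: even, yet `p - x` is odd.
  have hv : padicValNat 2 x = 0 := by omega
  have hxodd : ¬ 2 ∣ x := by simpa [hv] using pow_succ_padicValNat_not_dvd (p := 2) hx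
  have hpeven : 2 ∣ p := (dvd_pow_self 2 (by omega)).trans hkp
  have hceven : 2 ∣ 2 ^ c := dvd_pow_self 2 (by omega)
  have hk : 2 ^ k = 2 * 2 ^ c := by rw [show k = c + 1 by omega, pow_succ, mul_comm]
  unfold Nat.dist at hpx hp'x hsum
  omega

lemma Set.ncard_le_add_one_of_lt_imp_le {S : Set ℕ} (hS : S.Finite) {a c : ℕ}
    (hlow : ∀ k ∈ S, a < k) (hup : ∀ k ∈ S, ∀ K ∈ S, k < K → k ≤ a + c) :
    S.ncard ≤ c + 1 := by
  lift S to Finset ℕ using hS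
  rw [Set.ncard_coe_finset]
  rcases S.eq_empty_or_nonempty with rfl | hne
  · simp
  have hsub : S.erase (S.max' hne) ⊆ Finset.Ioc a (a + c) := fun k hk => by
    obtain ⟨hkK, hk⟩ := Finset.mem_erase.mp hk
    exact Finset.mem_Ioc.mpr ⟨hlow k hk,
      hup k hk _ (S.max'_mem hne) ((S.le_max' k hk).lt_of_ne hkK)⟩
  have := Finset.card_le_card hsub
  rw [Nat.card_Ioc, Finset.card_erase_of_mem (S.max'_mem hne)] at this
  omega

def pathOrder (n : ℕ) (i : Fin n) : ℕ := (n - padicValNat 2 (i + 1)) * n + i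

lemma pathOrder_injective (n : ℕ) : Function.Injective (pathOrder n) := fun i j h => by
  have := congrArg (· % n) h
  exact Fin.ext (by simpa [pathOrder, Nat.mod_eq_of_lt] using this)

lemma padicValNat_le_of_pathOrder_le {n : ℕ} {i j : Fin n} (h : pathOrder n i ≤ pathOrder n j) :
    padicValNat 2 (j + 1) ≤ padicValNat 2 (i + 1) := by
  have hle (k : Fin n) : padicValNat 2 (k + 1) ≤ n :=
    (padicValNat_le_nat_log _).trans ((Nat.log_lt_self 2 k.val.succ_ne_zero).le.trans k.isLt)
  have : n - padicValNat 2 (i + 1) < n - padicValNat 2 (j + 1) + 1 := by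
    refine Nat.lt_of_mul_lt_mul_right (a := n) ?_
    unfold pathOrder at h
    rw [add_mul, one_mul]
    omega
  have := hle i
  have := hle j
  omega

namespace SimpleGraph.pathGraph

variable {n : ℕ} {u v : Fin n}

lemma dist_le_walk_length (p : (pathGraph n).Walk u v) : Nat.dist u v ≤ p.length := by
  induction p with
  | nil => simp
  | cons h _ ih =>
    rw [pathGraph_adj] at h
    unfold Nat.dist at ih ⊢
    rw [Walk.length_cons]
    omega

lemma mem_support_of_mem_uIcc (p : (pathGraph n).Walk u v) {w : Fin n}
    (hw : (w : ℕ) ∈ Set.uIcc (u : ℕ) v) : w ∈ p.support := by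
  induction p with
  | nil => exact List.mem_singleton.mpr (Fin.ext (by simpa using hw))
  | @cons a b _ h _ ih =>
    rw [Walk.support_cons, List.mem_cons]
    rw [pathGraph_adj] at h
    rw [Set.mem_uIcc] at hw ih
    by_cases hwa : w = a
    · exact Or.inl hwa
    · exact Or.inr (ih (by have := Fin.val_ne_of_ne hwa; omega))

end SimpleGraph.pathGraph

lemma wcol_le_of_forall_ncard_le {V : Type} (G : SimpleGraph V) {σ : V → ℕ}
    (hσ : Function.Injective σ) {r b : ℕ}
    (h : ∀ v, {u | WeaklyReachable G σ r v u}.ncard ≤ b) : wcol G r ≤ b :=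
  calc wcol G r ≤ wcolOrd G σ r := Nat.sInf_le ⟨σ, hσ, rfl⟩
    _ ≤ b := csSup_le' <| by rintro _ ⟨v, rfl⟩; exact h v

lemma isTwoAdicPeak_of_weaklyReachable {n r : ℕ} {u v : Fin n}
    (h : WeaklyReachable (pathGraph n) (pathOrder n) r v u) :
    IsTwoAdicPeak (u + 1) (v + 1) ∧ Nat.dist (u + 1) (v + 1) ≤ r := by
  obtain ⟨p, -, hlen, hσ⟩ := h
  have hdist := pathGraph.dist_le_walk_length p
  refine ⟨fun q hq => ?_, by unfold Nat.dist at hdist ⊢; omega⟩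
  rw [Set.mem_uIcc] at hq
  let w : Fin n := ⟨q - 1, by omega⟩
  have hw : w ∈ p.support :=
    pathGraph.mem_support_of_mem_uIcc p (Set.mem_uIcc.mpr (by simp only [w]; omega))
  simpa [w, Nat.sub_add_cancel (show 1 ≤ q by omega)] using
    padicValNat_le_of_pathOrder_le (hσ w hw)

lemma ncard_weaklyReachable_pathOrder_le {n r : ℕ} (hr : 2 ≤ r) (v : Fin n) :
    {u | WeaklyReachable (pathGraph n) (pathOrder n) r v u}.ncard ≤ Nat.clog 2 r + 2 := by
  set R := {u | WeaklyReachable (pathGraph n) (pathOrder n) r v u}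
  have hpeak (u : Fin n) (hu : u ∈ R \ {v}) :
      IsTwoAdicPeak (u + 1) (v + 1) ∧ Nat.dist (u + 1) (v + 1) ≤ r :=
    isTwoAdicPeak_of_weaklyReachable hu.1
  have hne (u : Fin n) (hu : u ∈ R \ {v}) : (u : ℕ) + 1 ≠ v + 1 := fun h =>
    hu.2 (Fin.ext (by omega))
  have hinj : Set.InjOn (fun u : Fin n => padicValNat 2 (u + 1)) (R \ {v}) :=
    fun u hu u' hu' heq => Fin.ext <| Nat.succ_injective <|
      (hpeak u hu).1.eq_of_padicValNat_eq (hpeak u' hu').1 (by omega) (by omega) heq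
  have hcount := Set.ncard_le_add_one_of_lt_imp_le (Set.toFinite (_ '' (R \ {v})))
    (a := padicValNat 2 (v + 1)) (c := Nat.clog 2 r)
    (by
      rintro _ ⟨u, hu, rfl⟩
      exact (hpeak u hu).1.padicValNat_lt (by omega) (by omega) (hne u hu))
    (by
      rintro _ ⟨u, hu, rfl⟩ _ ⟨u', hu', rfl⟩ hlt
      exact padicValNat_le_add_clog (by omega) hr (hpeak u hu).2 (hpeak u' hu').2 hlt)
  rw [hinj.ncard_image] at hcount
  have hvR : v ∈ R := ⟨Walk.nil, Walk.IsPath.nil, by simp, by simp⟩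
  have := Set.ncard_sdiff_singleton_add_one hvR
  omega

lemma ncard_weaklyReachable_val_one_le {n : ℕ} (v : Fin n) :
    {u | WeaklyReachable (pathGraph n) Fin.val 1 v u}.ncard ≤ 2 := by
  have hsub : Fin.val '' {u | WeaklyReachable (pathGraph n) Fin.val 1 v u} ⊆
      {(v : ℕ) - 1, (v : ℕ)} := by
    rintro _ ⟨u, ⟨p, -, hlen, hσ⟩, rfl⟩
    have hdist := pathGraph.dist_le_walk_length p
    have := hσ v p.end_mem_support
    unfold Nat.dist at hdist
    simp only [Set.mem_insert_iff, Set.mem_singleton_iff]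
    omega
  calc _ = (Fin.val '' {u | WeaklyReachable (pathGraph n) Fin.val 1 v u}).ncard :=
        (Set.ncard_image_of_injective _ Fin.val_injective).symm
    _ ≤ ({(v : ℕ) - 1, (v : ℕ)} : Set ℕ).ncard := Set.ncard_le_ncard hsub
    _ ≤ 2 := (Set.ncard_insert_le _ _).trans (by simp)

theorem wcol_path_upper (r n : ℕ) (hr : 1 ≤ r) :
    wcol (pathGraph n) r ≤ Nat.clog 2 r + 2 := by
  rcases hr.eq_or_lt with rfl | hr
  · exact wcol_le_of_forall_ncard_le _ Fin.val_injective ncard_weaklyReachable_val_one_le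
  · exact wcol_le_of_forall_ncard_le _ (pathOrder_injective n)
      (ncard_weaklyReachable_pathOrder_le hr)
end

section
/- For every integer r ≥ 1 and every path P on at least 2r vertices, the r-th weak coloring number of P is at least ⌈log₂(r+1)⌉ + 1. -/
open SimpleGraph

/-!
In a path, `u` is weakly `r`-reachable from `w` as soon as the segment between them has at most
`r + 1` vertices and `σ` is minimal at `u` on it. In a segment `I`, let `v` minimise `σ`: one of
the two pieces of `I ∖ {v}` has at least `(|I| - 1) / 2` vertices, and `v` can be added to whatever
a recursion into that piece finds. This yields a vertex `w ∈ I` and `⌈log₂(|I| + 1)⌉` vertices of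
`I`, each the `σ`-minimum of its segment to `w`. Applied to the `r` vertices next to the
`σ`-minimum `v` of the first `2r` vertices, and adding `v`, this gives `⌈log₂(r + 1)⌉ + 1`
vertices weakly `r`-reachable from `w`.
-/

open Finset

theorem Nat.clog_two_succ_le_of_le {a b c : ℕ} (hab : a ≤ 2 * b + 1)
    (hb : Nat.clog 2 (b + 1) ≤ c) : Nat.clog 2 (a + 1) ≤ c + 1 := by
  rw [Nat.clog_le_iff_le_pow one_lt_two] at hb ⊢
  rw [pow_succ]
  omega

section Segments

variable {α β : Type*} [LinearOrder α] [LinearOrder β]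

theorem IsMinOn.forall_insert_isMinOn_uIcc {f : α → β} {K : Set α} {v w : α}
    (hvmin : IsMinOn f K v) (hK : K.OrdConnected) (hv : v ∈ K) (hw : w ∈ K) {S : Finset α}
    (hS : ∀ u ∈ S, IsMinOn f (Set.uIcc u w) u) : ∀ u ∈ insert v S, IsMinOn f (Set.uIcc u w) u := by
  intro u hu
  rcases mem_insert.1 hu with rfl | hu
  · exact hvmin.on_subset (hK.uIcc_subset hv hw)
  · exact hS u hu

theorem Finset.exists_ordConnected_subset_erase {I : Finset α} (hI : (I : Set α).OrdConnected)
    (v : α) : ∃ J ⊆ I.erase v, (J : Set α).OrdConnected ∧ #I ≤ 2 * #J + 1 := by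
  set L := I.filter (· < v)
  set R := I.filter (v < ·)
  have hL : (L : Set α).OrdConnected := by
    rw [coe_filter]; exact hI.inter Set.ordConnected_Iio
  have hR : (R : Set α).OrdConnected := by
    rw [coe_filter]; exact hI.inter Set.ordConnected_Ioi
  have hcard : #I ≤ #L + #R + 1 := by
    calc #I ≤ #(insert v (L ∪ R)) := card_le_card fun x hx => by
          rcases lt_trichotomy x v with h | h | h <;> simp [L, R, hx, h]
      _ ≤ #L + #R + 1 := (card_insert_le _ _).trans (by grw [card_union_le])
  rcases le_total #R #L with h | h
  · exact ⟨L, fun x hx => by simp_all [L, ne_of_lt], hL, by omega⟩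
  · exact ⟨R, fun x hx => by simp_all [R, ne_of_gt], hR, by omega⟩

theorem Finset.exists_clog_le_card_isMinOn_uIcc (f : α → β) (I : Finset α)
    (hI : (I : Set α).OrdConnected) (hne : I.Nonempty) :
    ∃ w ∈ I, ∃ S ⊆ I, Nat.clog 2 (#I + 1) ≤ #S ∧ ∀ u ∈ S, IsMinOn f (Set.uIcc u w) u := by
  induction I using Finset.strongInduction with
  | H I ih =>
  obtain ⟨v, hvI, hvmin⟩ := I.exists_min_image f hne
  obtain ⟨J, hJ, hJconn, hJcard⟩ := exists_ordConnected_subset_erase hI v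
  rcases J.eq_empty_or_nonempty with rfl | hJne
  · obtain rfl : I = {v} := eq_singleton_iff_unique_mem.2
      ⟨hvI, fun x hx => card_le_one.1 (by simpa using hJcard) x hx v hvI⟩
    exact ⟨v, mem_singleton_self v, {v}, subset_rfl, by simp [Nat.clog_le_iff_le_pow one_lt_two],
      by simp [isMinOn_iff]⟩
  have hJI : J ⊂ I := hJ.trans_ssubset (erase_ssubset hvI)
  obtain ⟨w, hwJ, S, hSJ, hcard, hS⟩ := ih J hJI hJconn hJne
  have hvS : v ∉ S := fun h => by simpa using hJ (hSJ h)
  refine ⟨w, hJI.subset hwJ, insert v S, insert_subset hvI (hSJ.trans hJI.subset), ?_,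
    (isMinOn_iff.2 hvmin).forall_insert_isMinOn_uIcc hI hvI (hJI.subset hwJ) hS⟩
  rw [card_insert_of_notMem hvS]
  exact Nat.clog_two_succ_le_of_le hJcard hcard

end Segments

namespace SimpleGraph

variable {α : Type*} [LinearOrder α] [SuccOrder α] [IsSuccArchimedean α]

theorem hasse_exists_walk_support_subset_Icc {a b : α} (hab : a ≤ b) :
    ∃ p : (hasse α).Walk a b, ∀ x ∈ p.support, x ∈ Set.Icc a b := by
  induction hab using Succ.rec with
  | rfl => exact ⟨.nil, by simp⟩
  | succ c hac ih =>
    obtain ⟨p, hp⟩ := ih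
    by_cases hc : IsMax c
    · rw [hc.succ_eq]
      exact ⟨p, hp⟩
    refine ⟨p.concat (hasse_adj.2 (Or.inl (Order.covBy_succ_of_not_isMax hc))), fun x hx => ?_⟩
    rw [Walk.support_concat, List.mem_append, List.mem_singleton] at hx
    rcases hx with hx | rfl
    · exact Set.Icc_subset_Icc_right (Order.le_succ c) (hp x hx)
    · exact ⟨hac.trans (Order.le_succ c), le_rfl⟩

theorem hasse_exists_isPath_support_subset_uIcc (a b : α) :
    ∃ p : (hasse α).Walk a b, p.IsPath ∧ ∀ x ∈ p.support, x ∈ Set.uIcc a b := by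
  classical
  suffices ∃ p : (hasse α).Walk a b, ∀ x ∈ p.support, x ∈ Set.uIcc a b by
    obtain ⟨p, hp⟩ := this
    exact ⟨p.bypass, p.bypass_isPath, fun x hx => hp x (p.support_bypass_subset_support hx)⟩
  rcases le_total a b with hab | hba
  · obtain ⟨p, hp⟩ := hasse_exists_walk_support_subset_Icc hab
    exact ⟨p, fun x hx => Set.Icc_subset_uIcc (hp x hx)⟩
  · obtain ⟨p, hp⟩ := hasse_exists_walk_support_subset_Icc hba
    exact ⟨p.reverse, fun x hx => Set.Icc_subset_uIcc' (hp x (by simpa using hx))⟩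

end SimpleGraph

theorem Fin.exists_adjacent_ordConnected {n r : ℕ} (hn : 2 * r ≤ n) (v : Fin n)
    (hv : v.val < 2 * r) :
    ∃ J : Finset (Fin n), v ∉ J ∧ #J = r ∧ (J : Set (Fin n)).OrdConnected ∧
      ((insert v J : Finset (Fin n)) : Set (Fin n)).OrdConnected ∧ ∀ x ∈ J, x.val < 2 * r := by
  by_cases hrv : r ≤ v.val
  · let a : Fin n := ⟨v - r, by omega⟩
    have hav : a ≤ v := Fin.le_def.2 (by simp [a])
    refine ⟨Ico a v, by simp, by simp [Fin.card_Ico, a]; omega,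
      by rw [coe_Ico]; exact Set.ordConnected_Ico, ?_, fun x hx => ?_⟩
    · rw [Ico_insert_right hav, coe_Icc]; exact Set.ordConnected_Icc
    · have := (mem_Ico.1 hx).2; omega
  · let b : Fin n := ⟨v + r, by omega⟩
    have hvb : v ≤ b := Fin.le_def.2 (by simp [b])
    refine ⟨Ioc v b, by simp, by simp [Fin.card_Ioc, b],
      by rw [coe_Ioc]; exact Set.ordConnected_Ioc, ?_, fun x hx => ?_⟩
    · rw [Ioc_insert_left hvb, coe_Icc]; exact Set.ordConnected_Icc
    · have := Fin.le_def.1 (mem_Ioc.1 hx).2; simp [b] at this; omega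

theorem weaklyReachable_pathGraph_of_isMinOn_uIcc {n r : ℕ} {σ : Fin n → ℕ} {u w : Fin n}
    (hcard : #(uIcc u w) ≤ r + 1) (hmin : IsMinOn σ (Set.uIcc u w) u) :
    WeaklyReachable (pathGraph n) σ r w u := by
  obtain ⟨p, hp, hsupp⟩ :
      ∃ p : (pathGraph n).Walk u w, p.IsPath ∧ ∀ x ∈ p.support, x ∈ Set.uIcc u w :=
    hasse_exists_isPath_support_subset_uIcc u w
  refine ⟨p, hp, ?_, fun x hx => isMinOn_iff.1 hmin x (hsupp x hx)⟩
  have hsub : p.support.toFinset ⊆ uIcc u w := fun x hx => by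
    rw [← mem_coe, coe_uIcc]
    exact hsupp x (List.mem_toFinset.1 hx)
  have := card_le_card hsub
  rw [List.toFinset_card_of_nodup hp.support_nodup, Walk.length_support] at this
  omega

theorem card_le_wcolOrd {V : Type} [Finite V] {G : SimpleGraph V} {σ : V → ℕ} {r : ℕ} {w : V}
    {T : Finset V} (hT : ∀ u ∈ T, WeaklyReachable G σ r w u) : #T ≤ wcolOrd G σ r := by
  have hbdd : BddAbove {m | ∃ v, {u | WeaklyReachable G σ r v u}.ncard = m} :=
    ⟨Nat.card V, by rintro _ ⟨v, rfl⟩; exact Set.ncard_le_card _⟩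
  calc #T = (T : Set V).ncard := (Set.ncard_coe_finset T).symm
    _ ≤ {u | WeaklyReachable G σ r w u}.ncard := Set.ncard_le_ncard hT (Set.toFinite _)
    _ ≤ wcolOrd G σ r := le_csSup hbdd ⟨w, rfl⟩

theorem le_wcol {V : Type} [Countable V] {G : SimpleGraph V} {r k : ℕ}
    (h : ∀ σ : V → ℕ, Function.Injective σ → k ≤ wcolOrd G σ r) : k ≤ wcol G r := by
  obtain ⟨σ, hσ⟩ := Countable.exists_injective_nat V
  exact le_csInf ⟨_, σ, hσ, rfl⟩ (by rintro _ ⟨σ, hσ, rfl⟩; exact h σ hσ)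

theorem exists_clog_add_one_le_card_weaklyReachable_pathGraph {n r : ℕ} (hr : 1 ≤ r)
    (hn : 2 * r ≤ n) (σ : Fin n → ℕ) :
    ∃ w : Fin n, ∃ T : Finset (Fin n), Nat.clog 2 (r + 1) + 1 ≤ #T ∧
      ∀ u ∈ T, WeaklyReachable (pathGraph n) σ r w u := by
  obtain ⟨v, hvI, hvmin⟩ := (univ.filter fun x : Fin n => x.val < 2 * r).exists_min_image σ
    ⟨⟨0, by omega⟩, by simp; omega⟩
  obtain ⟨J, hvJ, hJcard, hJ, hK, hJI⟩ := Fin.exists_adjacent_ordConnected hn v (by simpa using hvI)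
  obtain ⟨w, hwJ, S, hSJ, hScard, hS⟩ :=
    exists_clog_le_card_isMinOn_uIcc σ J hJ (card_pos.1 (by omega))
  have hvK : IsMinOn σ ((insert v J : Finset (Fin n)) : Set (Fin n)) v :=
    isMinOn_iff.2 fun x hx => by
      rcases mem_insert.1 hx with rfl | hx
      · exact le_rfl
      · exact hvmin x (by simpa using hJI x hx)
  have hwK : w ∈ ((insert v J : Finset (Fin n)) : Set (Fin n)) := mem_insert_of_mem hwJ
  refine ⟨w, insert v S, ?_, fun u hu => weaklyReachable_pathGraph_of_isMinOn_uIcc ?_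
    (hvK.forall_insert_isMinOn_uIcc hK (mem_insert_self v J) hwK hS u hu)⟩
  · rw [card_insert_of_notMem fun h => hvJ (hSJ h)]
    rw [hJcard] at hScard
    omega
  · have huK : u ∈ ((insert v J : Finset (Fin n)) : Set (Fin n)) :=
      insert_subset_insert v hSJ hu
    calc #(uIcc u w) ≤ #(insert v J) := card_le_card fun x hx => by
          rw [← mem_coe, coe_uIcc] at hx; exact hK.uIcc_subset huK hwK hx
      _ ≤ r + 1 := hJcard ▸ card_insert_le v J

theorem wcol_path_lower (r n : ℕ) (hr : 1 ≤ r) (hn : 2 * r ≤ n) :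
    Nat.clog 2 (r + 1) + 1 ≤ wcol (pathGraph n) r := by
  refine le_wcol fun σ _ => ?_
  obtain ⟨w, T, hT, hreach⟩ := exists_clog_add_one_le_card_weaklyReachable_pathGraph hr hn σ
  exact hT.trans (card_le_wcolOrd hreach)
end

section
/- For every graph G, tw(G) ≤ stw(G) ≤ tw(G) + 1, where tw is treewidth and stw is simple treewidth. -/
open SimpleGraph

/-- `(T, B)` is a tree-decomposition of `G`. -/
def IsTreeDecomp {V ι : Type} (G : SimpleGraph V) (T : SimpleGraph ι) (B : ι → Set V) : Prop :=
  T.Connected ∧ T.IsAcyclic ∧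
  (∀ v : V, ∃ t, v ∈ B t) ∧
  (∀ (v : V) (t₁ t₂ : ι), v ∈ B t₁ → v ∈ B t₂ →
    ∀ p : T.Walk t₁ t₂, p.IsPath → ∀ t ∈ p.support, v ∈ B t) ∧
  (∀ u v : V, G.Adj u v → ∃ t, u ∈ B t ∧ v ∈ B t)

/-- The treewidth of `G`. -/
noncomputable def treewidth {V : Type} (G : SimpleGraph V) : ℕ :=
  sInf { k | ∃ (ι : Type) (T : SimpleGraph ι) (B : ι → Set V),
    IsTreeDecomp G T B ∧ ∀ t, (B t).ncard ≤ k + 1 }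

/-- The simple treewidth of `G`: the least `k` admitting a `k`-simple tree-decomposition,
i.e. one of width at most `k` in which every `k`-element vertex set is contained in at
most two bags. -/
noncomputable def stw {V : Type} (G : SimpleGraph V) : ℕ :=
  sInf { k | ∃ (ι : Type) (T : SimpleGraph ι) (B : ι → Set V),
    IsTreeDecomp G T B ∧ (∀ t, (B t).ncard ≤ k + 1) ∧
    (∀ X : Set V, X.ncard = k → ∀ t₁ t₂ t₃ : ι,
      X ⊆ B t₁ → X ⊆ B t₂ → X ⊆ B t₃ → t₁ = t₂ ∨ t₁ = t₃ ∨ t₂ = t₃) }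

/-!
A tree-decomposition of width at most `k` becomes `(k + 1)`-simple once, for every
`(k + 1)`-set `X`, all nodes with bag `X` are contracted to one node. These nodes span a
subtree, because every bag on the path between two of them contains `X` and has at most
`k + 1` elements; contracting a tree along a map with connected fibers yields a tree, and
afterwards a `(k + 1)`-set lies in at most one bag. The other inequality holds because
simple decompositions are decompositions; the one-bag decomposition makes both infima
range over nonempty sets, so neither is the junk value `sInf ∅ = 0`.
-/

namespace SimpleGraph

variable {ι κ : Type*} {T : SimpleGraph ι} {f : ι → κ}

theorem Walk.exists_walk_map_support_subset {t u : ι} (q : T.Walk t u) :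
    ∃ w : (T.map f).Walk (f t) (f u), w.support ⊆ q.support.map f := by
  induction q with
  | nil => exact ⟨.nil, by simp⟩
  | @cons x y u h q ih =>
    obtain ⟨w, hw⟩ := ih
    by_cases hxy : f x = f y
    · exact ⟨w.copy hxy.symm rfl,
        by simpa using List.Subset.trans hw (List.subset_cons_self _ _)⟩
    · exact ⟨.cons (map_adj_apply' h hxy) w, by simpa using List.cons_subset_cons _ hw⟩

theorem Walk.exists_walk_of_walk_map
    (hfib : ∀ t u, f t = f u → ∃ q : T.Walk t u, ∀ s ∈ q.support, f s = f t)
    {a b : κ} (w : (T.map f).Walk a b) {t u : ι} (ht : f t = a) (hu : f u = b) :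
    ∃ q : T.Walk t u, ∀ x y, s(x, y) ∈ q.edges → f x = f y ∨ s(f x, f y) ∈ w.edges := by
  induction w generalizing t with
  | nil =>
    obtain ⟨q, hq⟩ := hfib t u (ht.trans hu.symm)
    refine ⟨q, fun x y he => .inl ?_⟩
    rw [hq x (q.fst_mem_support_of_mem_edges he), hq y (q.snd_mem_support_of_mem_edges he)]
  | @cons a c b h w ih =>
    obtain ⟨-, x, y, hxy, rfl, rfl⟩ := h
    obtain ⟨q₁, hq₁⟩ := hfib t x ht
    obtain ⟨q₂, hq₂⟩ := ih rfl hu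
    refine ⟨q₁.append (.cons hxy q₂), fun x' y' he => ?_⟩
    simp only [Walk.edges_append, Walk.edges_cons, List.mem_append, List.mem_cons] at he
    rcases he with he | he | he
    · left
      rw [hq₁ x' (q₁.fst_mem_support_of_mem_edges he),
        hq₁ y' (q₁.snd_mem_support_of_mem_edges he)]
    · have hmap : s(f x', f y') = s(f x, f y) := by simpa using congrArg (Sym2.map f) he
      exact .inr (hmap ▸ w.edges_cons _ ▸ List.mem_cons_self)
    · exact (hq₂ x' y' he).imp_right fun h => w.edges_cons _ ▸ List.mem_cons_of_mem _ h

theorem IsAcyclic.map_of_fibers (hT : T.IsAcyclic)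
    (hfib : ∀ t u, f t = f u → ∃ q : T.Walk t u, ∀ s ∈ q.support, f s = f t) :
    (T.map f).IsAcyclic := by
  rw [isAcyclic_iff_forall_adj_isBridge]
  rintro _ _ ⟨hne, x, y, hxy, rfl, rfl⟩
  refine isBridge_iff_forall_walk_mem_edges.mpr fun w => ?_
  obtain ⟨q, hq⟩ := Walk.exists_walk_of_walk_map hfib w rfl rfl
  have hbridge := isAcyclic_iff_forall_adj_isBridge.mp hT hxy
  exact (hq x y (isBridge_iff_forall_walk_mem_edges.mp hbridge q)).resolve_left hne

end SimpleGraph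

namespace IsTreeDecomp

variable {V ι κ : Type} {G : SimpleGraph V} {T : SimpleGraph ι} {B : ι → Set V}

theorem subset_of_mem_support (hd : IsTreeDecomp G T B) {X : Set V} {t₁ t₂ : ι}
    (h₁ : X ⊆ B t₁) (h₂ : X ⊆ B t₂) {p : T.Walk t₁ t₂} (hp : p.IsPath) {s : ι}
    (hs : s ∈ p.support) : X ⊆ B s :=
  fun v hv => hd.2.2.2.1 v t₁ t₂ (h₁ hv) (h₂ hv) p hp s hs

theorem map (hd : IsTreeDecomp G T B) {f : ι → κ} (hf : Function.Surjective f)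
    (B' : κ → Set V) (hB : ∀ t, B' (f t) = B t)
    (hfib : ∀ t u, f t = f u → ∃ q : T.Walk t u, ∀ s ∈ q.support, f s = f t) :
    IsTreeDecomp G (T.map f) B' := by
  classical
  have hacyc := hd.2.1.map_of_fibers hfib
  have : Nonempty κ := hd.1.nonempty.map f
  refine ⟨⟨hf.forall₂.mpr fun t u => ?_⟩, hacyc,
    fun v => ?_, fun v a₁ a₂ h₁ h₂ p hp c hc => ?_, fun u v huv => ?_⟩
  · obtain ⟨q⟩ := hd.1.preconnected t u
    exact ⟨(q.exists_walk_map_support_subset (f := f)).choose⟩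
  · obtain ⟨t, ht⟩ := hd.2.2.1 v
    exact ⟨f t, (hB t).symm ▸ ht⟩
  · obtain ⟨t₁, rfl⟩ := hf a₁
    obtain ⟨t₂, rfl⟩ := hf a₂
    obtain ⟨q⟩ := hd.1.preconnected t₁ t₂
    obtain ⟨w, hw⟩ := q.toPath.val.exists_walk_map_support_subset (f := f)
    have hpw : (⟨p, hp⟩ : (T.map f).Path _ _) = w.toPath :=
      (hacyc.subsingleton_path _ _).elim _ _
    have hcw : c ∈ w.support := w.support_toPath_subset_support (hpw ▸ hc)
    obtain ⟨s, hs, rfl⟩ := List.mem_map.mp (hw hcw)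
    rw [hB] at h₁ h₂ ⊢
    exact hd.2.2.2.1 v t₁ t₂ h₁ h₂ _ q.toPath.prop s hs
  · obtain ⟨t, hu, hv⟩ := hd.2.2.2.2 u v huv
    exact ⟨f t, (hB t).symm ▸ hu, (hB t).symm ▸ hv⟩

end IsTreeDecomp

section FullBags

variable {V ι : Type} {G : SimpleGraph V} {T : SimpleGraph ι} {B : ι → Set V} {k : ℕ}

noncomputable def fullBagKey (B : ι → Set V) (k : ℕ) (t : ι) : Set V ⊕ ι :=
  if (B t).ncard = k + 1 then .inl (B t) else .inr t

theorem sum_elim_fullBagKey (t : ι) : Sum.elim id B (fullBagKey B k t) = B t := by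
  unfold fullBagKey
  split_ifs <;> rfl

theorem fullBagKey_eq_inl {X : Set V} {t : ι} (hX : X.ncard = k + 1) (hB : B t = X) :
    fullBagKey B k t = .inl X := by
  rw [fullBagKey, if_pos (hB ▸ hX), hB]

variable [Finite V]

theorem IsTreeDecomp.exists_walk_of_fullBagKey_eq (hd : IsTreeDecomp G T B)
    (hb : ∀ t, (B t).ncard ≤ k + 1) {t u : ι} (h : fullBagKey B k t = fullBagKey B k u) :
    ∃ q : T.Walk t u, ∀ s ∈ q.support, fullBagKey B k s = fullBagKey B k t := by
  classical
  by_cases ht : (B t).ncard = k + 1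
  · by_cases hu : (B u).ncard = k + 1
    · have htu : B t = B u := by simpa [fullBagKey, ht, hu] using h
      obtain ⟨q⟩ := hd.1.preconnected t u
      refine ⟨q.toPath.val, fun s hs => ?_⟩
      have hsub := hd.subset_of_mem_support le_rfl htu.le q.toPath.prop hs
      have hst := Set.eq_of_subset_of_ncard_le hsub ((hb s).trans ht.ge) (Set.toFinite _)
      rw [fullBagKey_eq_inl ht hst.symm, fullBagKey_eq_inl ht rfl]
    · simp [fullBagKey, ht, hu] at h
  · by_cases hu : (B u).ncard = k + 1
    · simp [fullBagKey, ht, hu] at h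
    · obtain rfl : t = u := by simpa [fullBagKey, ht, hu] using h
      exact ⟨.nil, by simp⟩

theorem IsTreeDecomp.exists_bag_unique (hd : IsTreeDecomp G T B)
    (hb : ∀ t, (B t).ncard ≤ k + 1) :
    ∃ (κ : Type) (T' : SimpleGraph κ) (B' : κ → Set V),
      IsTreeDecomp G T' B' ∧ (∀ c, (B' c).ncard ≤ k + 1) ∧
      ∀ X : Set V, X.ncard = k + 1 → ∀ c₁ c₂,
        X ⊆ B' c₁ → X ⊆ B' c₂ → c₁ = c₂ := by
  set f := Set.rangeFactorization (fullBagKey B k)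
  have hf : Function.Surjective f := Set.rangeFactorization_surjective
  set B' : Set.range (fullBagKey B k) → Set V := fun c => Sum.elim id B c.1
  have hB (t : ι) : B' (f t) = B t := sum_elim_fullBagKey t
  have hkey (X : Set V) (hX : X.ncard = k + 1) (c) (hc : X ⊆ B' c) : c.1 = .inl X := by
    obtain ⟨t, rfl⟩ := hf c
    rw [hB] at hc
    exact fullBagKey_eq_inl hX
      (Set.eq_of_subset_of_ncard_le hc ((hb t).trans hX.ge) (Set.toFinite _)).symm
  refine ⟨_, T.map f, B', hd.map hf B' hB fun t u h => ?_,
    hf.forall.mpr fun t => (hB t).symm ▸ hb t,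
    fun X hX _ _ h₁ h₂ => Subtype.ext <| (hkey X hX _ h₁).trans (hkey X hX _ h₂).symm⟩
  obtain ⟨q, hq⟩ := hd.exists_walk_of_fullBagKey_eq hb (congrArg Subtype.val h)
  exact ⟨q, fun s hs => Subtype.ext (hq s hs)⟩

end FullBags

theorem isTreeDecomp_univ {V : Type} (G : SimpleGraph V) :
    IsTreeDecomp G (⊥ : SimpleGraph Unit) fun _ => Set.univ :=
  ⟨⟨fun _ _ => Reachable.refl _⟩, isAcyclic_bot, fun _ => ⟨(), trivial⟩,
    fun _ _ _ _ _ _ _ _ _ => trivial, fun _ _ _ => ⟨(), trivial, trivial⟩⟩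

theorem treewidth_le_stw {V : Type} (G : SimpleGraph V) : treewidth G ≤ stw G := by
  unfold treewidth stw
  refine csInf_le_csInf (OrderBot.bddBelow _) ?_ ?_
  · exact ⟨Nat.card V, Unit, ⊥, _, isTreeDecomp_univ G,
      fun _ => (Set.ncard_univ V).trans_le (Nat.le_succ _), fun _ _ _ _ _ _ _ _ => Or.inl rfl⟩
  · rintro k ⟨ι, T, B, hd, hb, -⟩
    exact ⟨ι, T, B, hd, hb⟩

theorem exists_isTreeDecomp_ncard_le_treewidth {V : Type} (G : SimpleGraph V) :
    ∃ (ι : Type) (T : SimpleGraph ι) (B : ι → Set V),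
      IsTreeDecomp G T B ∧ ∀ t, (B t).ncard ≤ treewidth G + 1 :=
  Nat.sInf_mem (s := {k | ∃ (ι : Type) (T : SimpleGraph ι) (B : ι → Set V),
      IsTreeDecomp G T B ∧ ∀ t, (B t).ncard ≤ k + 1})
    ⟨Nat.card V, Unit, ⊥, _, isTreeDecomp_univ G,
      fun _ => (Set.ncard_univ V).trans_le (Nat.le_succ _)⟩

theorem stw_le_treewidth_succ {V : Type} [Finite V] (G : SimpleGraph V) :
    stw G ≤ treewidth G + 1 := by
  obtain ⟨ι, T, B, hd, hb⟩ := exists_isTreeDecomp_ncard_le_treewidth G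
  obtain ⟨κ, T', B', hd', hb', hunique⟩ := hd.exists_bag_unique hb
  exact Nat.sInf_le ⟨κ, T', B', hd', fun c => (hb' c).trans (Nat.le_succ _),
    fun X hX c₁ c₂ _ h₁ h₂ _ => Or.inl (hunique X hX c₁ c₂ h₁ h₂)⟩

theorem treewidth_le_stw_le_treewidth_succ
    {V : Type} [Fintype V] (G : SimpleGraph V) :
    treewidth G ≤ stw G ∧ stw G ≤ treewidth G + 1 :=
  ⟨treewidth_le_stw G, stw_le_treewidth_succ G⟩
end

section
/- Let G be a connected chordal graph with BFS-layering (L_0, L_1, …) from a root, and let H be a connected component of the subgraph induced on the union of layers L_j with j ≥ i, for some i ≥ 1. Then the set of neighbors of V(H) contained in L_{i−1} (the shadow of H) is a clique in G. -/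
/-!
Suppose two vertices `u, w` of the shadow are not adjacent. Join them once through `C` and once
through the layers below `L_{i-1}` (along shortest paths to the root), and shorten both walks to
chordless paths. The two paths meet only in `u` and `w`, and no edge joins their interiors, which
lie in layers at least two apart. So together they form a chordless cycle of length at least 4.
-/

open SimpleGraph

/-- A graph is chordal if every cycle of length at least 4 has a chord. -/
def IsChordal {V : Type} (G : SimpleGraph V) : Prop :=
  ∀ (v : V) (c : G.Walk v v), c.IsCycle → 4 ≤ c.length →
    ∃ u w, u ∈ c.support ∧ w ∈ c.support ∧ G.Adj u w ∧ s(u, w) ∉ c.edges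

namespace SimpleGraph

variable {V : Type*} {G : SimpleGraph V} {u w a b : V}

namespace Walk

theorem two_le_length_of_notMem_edges (p : G.Walk a b) (hne : a ≠ b) (he : s(a, b) ∉ p.edges) :
    2 ≤ p.length := by
  match p with
  | nil => exact absurd rfl hne
  | cons _ nil => simp at he
  | cons _ (cons _ _) => simp

theorem exists_append_append_of_mem_support (p : G.Walk u w) (ha : a ∈ p.support)
    (hb : b ∈ p.support) :
    (∃ (q : G.Walk u a) (m : G.Walk a b) (r : G.Walk b w), p = q.append (m.append r)) ∨
      ∃ (q : G.Walk u b) (m : G.Walk b a) (r : G.Walk a w), p = q.append (m.append r) := by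
  classical
  by_cases hb' : b ∈ (p.dropUntil a ha).support
  · refine .inl ⟨p.takeUntil a ha, (p.dropUntil a ha).takeUntil b hb',
      (p.dropUntil a ha).dropUntil b hb', ?_⟩
    rw [(p.dropUntil a ha).take_spec hb', take_spec]
  · have hb' : b ∈ (p.takeUntil a ha).support := by
      rw [← p.take_spec ha, mem_support_append_iff] at hb
      exact hb.resolve_right hb'
    refine .inr ⟨(p.takeUntil a ha).takeUntil b hb', (p.takeUntil a ha).dropUntil b hb',
      p.dropUntil a ha, ?_⟩
    rw [append_assoc, take_spec, take_spec]

theorem IsChord.exists_length_lt {p : G.Walk u w} (h : p.IsChord s(a, b)) :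
    ∃ q : G.Walk u w, q.length < p.length ∧ q.support ⊆ p.support := by
  obtain ⟨hab, he, ha, hb⟩ := isChord_sym2Mk.mp h
  wlog hdecomp : ∃ (q : G.Walk u a) (m : G.Walk a b) (r : G.Walk b w), p = q.append (m.append r)
      generalizing a b
  · refine (p.exists_append_append_of_mem_support ha hb).elim (absurd · hdecomp) fun hba => ?_
    exact this (by rwa [Sym2.eq_swap]) hab.symm (by rwa [Sym2.eq_swap]) hb ha hba
  obtain ⟨q, m, r, rfl⟩ := hdecomp
  have hm : 2 ≤ m.length := m.two_le_length_of_notMem_edges hab.ne fun hm => he (by simp [hm])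
  refine ⟨q.append (cons hab r), ?_, fun v => ?_⟩
  · simp only [length_append, length_cons]
    omega
  · simp only [mem_support_append_iff, support_cons, List.mem_cons]
    rintro (hv | rfl | hv) <;> simp [*]

theorem IsPath.start_notMem_support_tail {p : G.Walk u w} (hp : p.IsPath) :
    u ∉ p.support.tail := by
  have h := hp.support_nodup
  rw [← p.cons_tail_support, List.nodup_cons] at h
  exact h.1

theorem exists_isPath_isChordless (s : Set V) (p : G.Walk u w) (hp : ∀ v ∈ p.support, v ∈ s) :
    ∃ q : G.Walk u w, q.IsPath ∧ q.IsChordless ∧ ∀ v ∈ q.support, v ∈ s := by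
  classical
  have hex : ∃ n, ∃ q : G.Walk u w, q.IsPath ∧ (∀ v ∈ q.support, v ∈ s) ∧ q.length = n :=
    ⟨_, p.bypass, p.bypass_isPath, fun v hv => hp v (p.support_bypass_subset_support hv), rfl⟩
  obtain ⟨q, hq, hqs, hqlen⟩ := Nat.find_spec hex
  refine ⟨q, hq, ?_, hqs⟩
  rintro ⟨a, b⟩ he
  obtain ⟨r, hrlen, hrsupp⟩ := he.exists_length_lt
  exact Nat.find_min hex (hqlen ▸ r.length_bypass_le_length.trans_lt hrlen)
    ⟨r.bypass, r.bypass_isPath,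
      fun v hv => hqs v (hrsupp (r.support_bypass_subset_support hv)), rfl⟩

theorem dist_lt_of_mem_support {p : G.Walk u w} (hp : p.length = G.dist u w) (ha : a ∈ p.support)
    (haw : a ≠ w) : G.dist u a < G.dist u w := by
  classical
  exact hp ▸ (dist_le _).trans_lt (length_takeUntil_lt_length ha haw)

end Walk

theorem Preconnected.exists_walk_of_adj {s : Set V} {x y : V} (h : (G.induce s).Preconnected)
    (hx : x ∈ s) (hy : y ∈ s) (hux : G.Adj u x) (hwy : G.Adj w y) :
    ∃ p : G.Walk u w, ∀ v ∈ p.support, v ∈ insert u (insert w s) := by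
  obtain ⟨q⟩ := h ⟨x, hx⟩ ⟨y, hy⟩
  refine ⟨((q.map (Embedding.induce s).toHom).concat hwy.symm).cons hux, fun v hv => ?_⟩
  -- `erw`: the mapped walk ends at `x` and `y` only up to unfolding the embedding
  erw [Walk.support_cons, Walk.support_concat, List.mem_cons, List.mem_append, Walk.support_map,
    List.mem_map, List.mem_singleton] at hv
  rcases hv with rfl | ⟨v', -, rfl⟩ | rfl
  exacts [.inl rfl, .inr (.inr v'.2), .inr (.inl rfl)]

theorem Reachable.exists_walk_support_subset_dist_lt {r : V} (hu : G.Reachable r u)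
    (hw : G.Reachable r w) (h : G.dist r u = G.dist r w) :
    ∃ p : G.Walk u w, ∀ v ∈ p.support, v ∈ insert u (insert w {v | G.dist r v < G.dist r u}) := by
  obtain ⟨pu, hpu⟩ := hu.exists_walk_length_eq_dist
  obtain ⟨pw, hpw⟩ := hw.exists_walk_length_eq_dist
  refine ⟨pu.reverse.append pw, fun v hv => ?_⟩
  rw [Walk.mem_support_append_iff, Walk.support_reverse, List.mem_reverse] at hv
  by_cases hvu : v = u
  · exact .inl hvu
  by_cases hvw : v = w
  · exact .inr (.inl hvw)
  refine .inr (.inr ?_)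
  rcases hv with hv | hv
  · exact pu.dist_lt_of_mem_support hpu hv hvu
  · exact h ▸ pw.dist_lt_of_mem_support hpw hv hvw

end SimpleGraph

section

variable {V : Type} {G : SimpleGraph V} {u w : V}

open Walk

theorem IsChordal.adj_of_isChordless_isPath (hch : IsChordal G) {P S : G.Walk u w}
    (hP : P.IsPath) (hS : S.IsPath) (hPc : P.IsChordless) (hSc : S.IsChordless) (hne : u ≠ w)
    (hmeet : ∀ v ∈ P.support, v ∈ S.support → v = u ∨ v = w)
    (hcross : ∀ a ∈ P.support, ∀ b ∈ S.support, G.Adj a b → a ∈ S.support ∨ b ∈ P.support) :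
    G.Adj u w := by
  by_contra hnadj
  have hP2 := P.two_le_length_of_notMem_edges hne fun h => hnadj (P.adj_of_mem_edges h)
  have hS2 := S.two_le_length_of_notMem_edges hne fun h => hnadj (S.adj_of_mem_edges h)
  have hcyc : (P.append S.reverse).IsCycle := by
    refine hP.isCycle_append hS.reverse (fun v hvP hvS => ?_) (by omega)
    have hvS' : v ∈ S.support := by simpa using List.mem_of_mem_tail hvS
    rcases hmeet v (List.mem_of_mem_tail hvP) hvS' with rfl | rfl
    · exact hP.start_notMem_support_tail hvP
    · exact hS.reverse.start_notMem_support_tail hvS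
  obtain ⟨a, b, ha, hb, hab, he⟩ :=
    hch u _ hcyc (by simp only [length_append, length_reverse]; omega)
  simp only [mem_support_append_iff, support_reverse, List.mem_reverse] at ha hb
  simp only [edges_append, edges_reverse, List.mem_append, List.mem_reverse, not_or] at he
  have hboth : (a ∈ P.support ∧ b ∈ P.support) ∨ (a ∈ S.support ∧ b ∈ S.support) := by
    rcases ha with ha | ha <;> rcases hb with hb | hb
    · exact .inl ⟨ha, hb⟩
    · exact (hcross a ha b hb hab).elim (fun h => .inr ⟨h, hb⟩) fun h => .inl ⟨ha, h⟩
    · exact (hcross b hb a ha hab.symm).elim (fun h => .inr ⟨ha, h⟩) fun h => .inl ⟨h, hb⟩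
    · exact .inr ⟨ha, hb⟩
  rcases hboth with ⟨ha, hb⟩ | ⟨ha, hb⟩
  · exact he.1 (hPc.mem_edges ha hb hab)
  · exact he.2 (hSc.mem_edges ha hb hab)

theorem IsChordal.adj_of_separated_walks (hch : IsChordal G) {A B : Set V} (hne : u ≠ w)
    (hAB : Disjoint A B) (hnadj : ∀ a ∈ A, ∀ b ∈ B, ¬G.Adj a b)
    (p : G.Walk u w) (hp : ∀ v ∈ p.support, v ∈ insert u (insert w A))
    (q : G.Walk u w) (hq : ∀ v ∈ q.support, v ∈ insert u (insert w B)) : G.Adj u w := by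
  obtain ⟨P, hP, hPc, hPs⟩ := p.exists_isPath_isChordless _ hp
  obtain ⟨S, hS, hSc, hSs⟩ := q.exists_isPath_isChordless _ hq
  refine hch.adj_of_isChordless_isPath hP hS hPc hSc hne (fun v hvP hvS => ?_)
    fun a ha b hb hab => ?_
  · rcases hPs v hvP with rfl | rfl | hvA
    · exact .inl rfl
    · exact .inr rfl
    · rcases hSs v hvS with rfl | rfl | hvB
      · exact .inl rfl
      · exact .inr rfl
      · exact absurd hvB (hAB.notMem_of_mem_left hvA)
  · rcases hPs a ha with rfl | rfl | haA
    · exact .inl S.start_mem_support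
    · exact .inl S.end_mem_support
    · rcases hSs b hb with rfl | rfl | hbB
      · exact .inr P.start_mem_support
      · exact .inr P.end_mem_support
      · exact absurd hab (hnadj a haA b hbB)

end

theorem shadow_isClique_general
    {V : Type} (G : SimpleGraph V) (hG : G.Connected) (hch : IsChordal G)
    (root : V) (i : ℕ) (C : Set V)
    (hCsub : C ⊆ {v | i ≤ G.dist root v})
    (hCconn : (G.induce C).Connected) :
    G.IsClique {u | G.dist root u = i - 1 ∧ ∃ v ∈ C, G.Adj u v} := by
  rintro u ⟨hu, x, hxC, hux⟩ w ⟨hw, y, hyC, hwy⟩ hne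
  obtain ⟨p, hp⟩ := hCconn.preconnected.exists_walk_of_adj hxC hyC hux hwy
  obtain ⟨q, hq⟩ := (hG root u).exists_walk_support_subset_dist_lt (hG root w) (hu.trans hw.symm)
  refine hch.adj_of_separated_walks hne (Set.disjoint_left.mpr fun v hvC hv => ?_)
    (fun a haC b hb hab => ?_) p hp q hq
  · have : i ≤ G.dist root v := hCsub hvC
    have : G.dist root v < G.dist root u := hv
    omega
  · have : i ≤ G.dist root a := hCsub haC
    have : G.dist root b < G.dist root u := hb
    have := hab.diff_dist_adj (u := root)
    omega

theorem shadow_isClique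
    {V : Type} [Fintype V] (G : SimpleGraph V) (hG : G.Connected) (hch : IsChordal G)
    (root : V) (i : ℕ) (hi : 1 ≤ i) (C : Set V)
    (hCsub : C ⊆ {v | i ≤ G.dist root v})
    (hCconn : (G.induce C).Connected)
    (hCmax : ∀ u ∈ C, ∀ v, i ≤ G.dist root v → G.Adj u v → v ∈ C) :
    G.IsClique {u | G.dist root u = i - 1 ∧ ∃ v ∈ C, G.Adj u v} :=
  shadow_isClique_general G hG hch root i C hCsub hCconn
end

section
/- Define g(0,k) = 1 for all k ≥ 1, g(r,1) = ⌈log₂ r⌉ + 1 for r ≥ 1, and g(r,k) = Σ_{i=0}^{r} g(i, k−1) for r ≥ 1, k ≥ 2. Then g(r,k) ≥ r^{k−1} ln(r) / k! for all integers r, k ≥ 1. -/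
/-! Induction on `k`. For `k = 1` the bound is `log r ≤ ⌈log₂ r⌉`. The inductive step reduces to the
discrete integral estimate `r ^ (m + 1) * log r / (m + 2) ≤ ∑ i ≤ r, i ^ m * log i`, proved by
induction on `r`: the increment of `x ^ (m + 1) * log x` from `x` to `x + 1` is at most
`(m + 1) (x + 1) ^ m log (x + 1) + x ^ m` (binomial bound plus `log (1 + 1/x) ≤ 1/x`), and for
`x ≥ 2` the extra `x ^ m` is absorbed because `log (x + 1) ≥ 1`. -/

open Real Finset

lemma add_one_pow_succ_sub_pow_le {x : ℝ} (hx : 0 ≤ x) (m : ℕ) :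
    (x + 1) ^ (m + 1) - x ^ (m + 1) ≤ (m + 1) * (x + 1) ^ m := by
  have := abs_pow_sub_pow_le (x + 1) x (m + 1)
  simp only [add_sub_cancel_left, abs_one, one_mul, Nat.cast_succ, add_tsub_cancel_right,
    abs_of_nonneg hx, abs_of_nonneg (by linarith : 0 ≤ x + 1),
    max_eq_left (by linarith : x ≤ x + 1)] at this
  exact (le_abs_self _).trans this

lemma log_add_one_sub_log_le {x : ℝ} (hx : 0 < x) : log (x + 1) - log x ≤ x⁻¹ := by
  have := log_le_sub_one_of_pos (show 0 < (x + 1) / x by positivity)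
  rwa [log_div (by positivity) hx.ne', add_div, div_self hx.ne', one_div, add_sub_cancel_left] at this

lemma one_le_log_add_one {x : ℝ} (hx : 2 ≤ x) : 1 ≤ log (x + 1) := by
  rw [le_log_iff_exp_le (by linarith)]
  linarith [exp_one_lt_d9]

lemma log_le_clog_two (n : ℕ) : log n ≤ Nat.clog 2 n := by
  rcases n.eq_zero_or_pos with rfl | hn
  · simp
  calc log n ≤ log ((2 : ℝ) ^ Nat.clog 2 n) :=
        log_le_log (by exact_mod_cast hn) (by exact_mod_cast Nat.le_pow_clog one_lt_two n)
    _ = Nat.clog 2 n * log 2 := log_pow _ _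
    _ ≤ Nat.clog 2 n := mul_le_of_le_one_right (Nat.cast_nonneg _) (by linarith [log_two_lt_d9])

lemma pow_succ_mul_log_add_one_sub_le {x : ℝ} (hx : 2 ≤ x) (m : ℕ) :
    (x + 1) ^ (m + 1) * log (x + 1) - x ^ (m + 1) * log x ≤
      (m + 2) * ((x + 1) ^ m * log (x + 1)) := by
  have hlog : 0 ≤ log (x + 1) := log_nonneg (by linarith)
  have hdiff : x ^ (m + 1) * (log (x + 1) - log x) ≤ x ^ m :=
    calc x ^ (m + 1) * (log (x + 1) - log x) ≤ x ^ (m + 1) * x⁻¹ :=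
          mul_le_mul_of_nonneg_left (log_add_one_sub_log_le (by linarith)) (by positivity)
      _ = x ^ m := by field_simp; ring
  have hx_pow : x ^ m ≤ (x + 1) ^ m * log (x + 1) :=
    calc x ^ m ≤ (x + 1) ^ m := pow_le_pow_left₀ (by linarith) (by linarith) m
      _ ≤ (x + 1) ^ m * log (x + 1) :=
          le_mul_of_one_le_right (by positivity) (one_le_log_add_one hx)
  calc (x + 1) ^ (m + 1) * log (x + 1) - x ^ (m + 1) * log x
      = ((x + 1) ^ (m + 1) - x ^ (m + 1)) * log (x + 1) + x ^ (m + 1) * (log (x + 1) - log x) := by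
        ring
    _ ≤ (m + 1) * (x + 1) ^ m * log (x + 1) + (x + 1) ^ m * log (x + 1) :=
        add_le_add (mul_le_mul_of_nonneg_right (add_one_pow_succ_sub_pow_le (by linarith) m) hlog)
          (hdiff.trans hx_pow)
    _ = (m + 2) * ((x + 1) ^ m * log (x + 1)) := by ring

lemma pow_succ_mul_log_div_le_sum (m r : ℕ) :
    (r : ℝ) ^ (m + 1) * log r / (m + 2) ≤ ∑ i ∈ range (r + 1), (i : ℝ) ^ m * log i := by
  rcases lt_or_ge r 2 with hr | hr
  · have hlog : log r = 0 := by interval_cases r <;> simp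
    rw [hlog, mul_zero, zero_div]
    exact sum_nonneg fun i _ ↦ mul_nonneg (by positivity) (log_natCast_nonneg i)
  induction r, hr using Nat.le_induction with
  | base =>
    rw [sum_range_succ, sum_range_succ, sum_range_one]
    simp only [Nat.cast_ofNat, CharP.cast_eq_zero, Nat.cast_one, log_zero, log_one, mul_zero,
      zero_add, div_le_iff₀ (by positivity : (0 : ℝ) < m + 2)]
    have hlog2 : (0 : ℝ) ≤ 2 ^ m * log 2 := by positivity
    rw [pow_succ]
    nlinarith [(Nat.cast_nonneg m : (0 : ℝ) ≤ m)]
  | succ r hr ih =>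
    rw [sum_range_succ, div_le_iff₀ (by positivity)]
    rw [div_le_iff₀ (by positivity)] at ih
    have hstep := pow_succ_mul_log_add_one_sub_le (x := r) (by exact_mod_cast hr) m
    push_cast
    linarith

theorem g_lower_bound_general (g : ℕ → ℕ → ℕ)
    (h1 : ∀ r, 1 ≤ r → g r 1 = Nat.clog 2 r + 1)
    (hrec : ∀ r k, 1 ≤ r → 2 ≤ k → g r k = ∑ i ∈ Finset.range (r + 1), g i (k - 1)) :
    ∀ r k : ℕ, 1 ≤ r → 1 ≤ k →
      (r : ℝ) ^ (k - 1) * Real.log (r : ℝ) / (Nat.factorial k) ≤ (g r k : ℝ) := by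
  intro r k hr hk
  induction k, hk using Nat.le_induction generalizing r with
  | base =>
    rw [h1 r hr]
    push_cast
    simpa using (log_le_clog_two r).trans (le_add_of_nonneg_right zero_le_one)
  | succ k hk ih =>
    obtain ⟨m, rfl⟩ : ∃ m, k = m + 1 := ⟨k - 1, by omega⟩
    have hterm : ∀ i ∈ range (r + 1), (i : ℝ) ^ m * log i / (m + 1).factorial ≤ g i (m + 1) := by
      intro i _
      rcases i.eq_zero_or_pos with rfl | hi
      · simp -- `log 0 = 0` in Mathlib
      · simpa using ih i hi
    calc (r : ℝ) ^ (m + 1 + 1 - 1) * log r / (m + 1 + 1).factorial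
        = (r : ℝ) ^ (m + 1) * log r / (m + 2) / (m + 1).factorial := by
          rw [Nat.factorial_succ (m + 1), div_div]; push_cast; ring
      _ ≤ (∑ i ∈ range (r + 1), (i : ℝ) ^ m * log i) / (m + 1).factorial := by
          gcongr; exact pow_succ_mul_log_div_le_sum m r
      _ ≤ ∑ i ∈ range (r + 1), (g i (m + 1) : ℝ) := by
          rw [sum_div]; exact sum_le_sum hterm
      _ = g r (m + 1 + 1) := by rw [hrec r (m + 1 + 1) hr (by omega)]; push_cast; rfl

theorem g_lower_bound (g : ℕ → ℕ → ℕ)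
    (h0 : ∀ k, 1 ≤ k → g 0 k = 1)
    (h1 : ∀ r, 1 ≤ r → g r 1 = Nat.clog 2 r + 1)
    (hrec : ∀ r k, 1 ≤ r → 2 ≤ k → g r k = ∑ i ∈ Finset.range (r + 1), g i (k - 1)) :
    ∀ r k : ℕ, 1 ≤ r → 1 ≤ k →
      (r : ℝ) ^ (k - 1) * Real.log (r : ℝ) / (Nat.factorial k) ≤ (g r k : ℝ) :=
  g_lower_bound_general g h1 hrec
end
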